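/- arXiv:2406.00995 — 5 statements merged into one kernel-verified Lean document; each statement's English description precedes it below -/
import Mathlib

section
/- The function f(x, y, z_1, ..., z_n) = log(x·y − Σ_{k=1}^n z_k²) is concave on the open subset of ℝ^{n+2} where x > 0, y > 0, and x·y − Σ_k z_k² > 0. -/
open Real Finset

lemma pos_comb {a b x y : ℝ} (ha : 0 ≤ a) (hb : 0 ≤ b) (hab : a + b = 1)
    (hx : 0 < x) (hy : 0 < y) : 0 < a * x + b * y := by
  rcases ha.eq_or_lt with h | h
  · have hb1 : b = 1 := by linarith
    simp [← h, hb1, hy]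
  · have := mul_pos h hx
    nlinarith [mul_nonneg hb hy.le]

-- √A√B + √(u-A)√(v-B) ≤ √u√v for 0 ≤ A ≤ u, 0 ≤ B ≤ v
lemma sqrt_key {u v A B : ℝ} (hA : 0 ≤ A) (hB : 0 ≤ B) (hAu : A ≤ u) (hBv : B ≤ v) :
    Real.sqrt A * Real.sqrt B + Real.sqrt (u - A) * Real.sqrt (v - B)
      ≤ Real.sqrt u * Real.sqrt v := by
  have hu : 0 ≤ u := hA.trans hAu
  have hv : 0 ≤ v := hB.trans hBv
  rw [← Real.sqrt_mul hu]
  have h1 : 0 ≤ Real.sqrt A * Real.sqrt B + Real.sqrt (u - A) * Real.sqrt (v - B) := by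
    positivity
  rw [show u * v = (A + (u - A)) * (B + (v - B)) by ring]
  refine (Real.le_sqrt h1 (by nlinarith)).mpr ?_
  have e1 := Real.sq_sqrt hA
  have e2 := Real.sq_sqrt hB
  have e3 := Real.sq_sqrt (sub_nonneg.2 hAu)
  have e4 := Real.sq_sqrt (sub_nonneg.2 hBv)
  nlinarith [sq_nonneg (Real.sqrt A * Real.sqrt (v - B) - Real.sqrt B * Real.sqrt (u - A)),
    Real.sqrt_nonneg A, Real.sqrt_nonneg B, Real.sqrt_nonneg (u - A), Real.sqrt_nonneg (v - B)]

lemma main_ineq (n : ℕ) (xp yp xq yq : ℝ) (zp zq : Fin n → ℝ)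
    (hxp : 0 < xp) (hyp : 0 < yp) (hxq : 0 < xq) (hyq : 0 < yq)
    (hp : 0 < xp * yp - ∑ k, (zp k) ^ 2) (hq : 0 < xq * yq - ∑ k, (zq k) ^ 2)
    (a b : ℝ) (ha : 0 ≤ a) (hb : 0 ≤ b) (hab : a + b = 1) :
    (xp * yp - ∑ k, (zp k) ^ 2) ^ a * (xq * yq - ∑ k, (zq k) ^ 2) ^ b
      ≤ (a * xp + b * xq) * (a * yp + b * yq) - ∑ k, (a * zp k + b * zq k) ^ 2 := by
  set A := ∑ k, (zp k) ^ 2 with hAdef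
  set B := ∑ k, (zq k) ^ 2 with hBdef
  have hA : 0 ≤ A := Finset.sum_nonneg fun k _ => sq_nonneg _
  have hB : 0 ≤ B := Finset.sum_nonneg fun k _ => sq_nonneg _
  set P := xp * yp - A with hPdef
  set Q := xq * yq - B with hQdef
  have hsum : ∑ k, (a * zp k + b * zq k) ^ 2
      = a ^ 2 * A + 2 * a * b * (∑ k, zp k * zq k) + b ^ 2 * B := by
    rw [hAdef, hBdef, Finset.mul_sum, Finset.mul_sum, Finset.mul_sum,
      ← Finset.sum_add_distrib, ← Finset.sum_add_distrib]
    exact Finset.sum_congr rfl fun k _ => by ring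
  have hCS : ∑ k, zp k * zq k ≤ Real.sqrt A * Real.sqrt B :=
    Real.sum_mul_le_sqrt_mul_sqrt _ _ _
  have hAM : 2 * Real.sqrt (xp * yp) * Real.sqrt (xq * yq) ≤ xp * yq + xq * yp := by
    have h1 : Real.sqrt (xp * yp) * Real.sqrt (xq * yq)
        = Real.sqrt (xp * yq) * Real.sqrt (xq * yp) := by
      rw [← Real.sqrt_mul (by positivity), ← Real.sqrt_mul (by positivity)]
      ring_nf
    have e1 := Real.sq_sqrt (by positivity : (0:ℝ) ≤ xp * yq)
    have e2 := Real.sq_sqrt (by positivity : (0:ℝ) ≤ xq * yp)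
    nlinarith [sq_nonneg (Real.sqrt (xp * yq) - Real.sqrt (xq * yp))]
  have hkey := sqrt_key hA hB (le_of_lt (by linarith : A < xp * yp))
    (le_of_lt (by linarith : B < xq * yq))
  have hC : 2 * Real.sqrt P * Real.sqrt Q ≤ xp * yq + xq * yp - 2 * (∑ k, zp k * zq k) := by
    rw [hPdef, hQdef]; nlinarith
  have hsP := Real.sq_sqrt hp.le
  have hsQ := Real.sq_sqrt hq.le
  have hRHS : (a * Real.sqrt P + b * Real.sqrt Q) ^ 2
      ≤ (a * xp + b * xq) * (a * yp + b * yq) - ∑ k, (a * zp k + b * zq k) ^ 2 := by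
    rw [hsum]
    have : (a * xp + b * xq) * (a * yp + b * yq)
        - (a ^ 2 * A + 2 * a * b * (∑ k, zp k * zq k) + b ^ 2 * B)
        = a ^ 2 * P + b ^ 2 * Q + a * b * (xp * yq + xq * yp - 2 * (∑ k, zp k * zq k)) := by
      rw [hPdef, hQdef]; ring
    rw [this]
    nlinarith [mul_nonneg ha hb]
  have hgm : Real.sqrt P ^ a * Real.sqrt Q ^ b ≤ a * Real.sqrt P + b * Real.sqrt Q :=
    Real.geom_mean_le_arith_mean2_weighted ha hb (Real.sqrt_nonneg _) (Real.sqrt_nonneg _) hab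
  have hLHS : P ^ a * Q ^ b ≤ (a * Real.sqrt P + b * Real.sqrt Q) ^ 2 := by
    have h2 : (Real.sqrt P ^ a * Real.sqrt Q ^ b) ^ 2 = P ^ a * Q ^ b := by
      rw [mul_pow, ← Real.rpow_natCast (Real.sqrt P ^ a) 2,
        ← Real.rpow_natCast (Real.sqrt Q ^ b) 2,
        ← Real.rpow_mul (Real.sqrt_nonneg _), ← Real.rpow_mul (Real.sqrt_nonneg _)]
      push_cast
      rw [show a * 2 = 2 * a by ring, show b * 2 = 2 * b by ring,
        Real.rpow_mul (Real.sqrt_nonneg _), Real.rpow_mul (Real.sqrt_nonneg _),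
        Real.rpow_two]
      simp [Real.sq_sqrt hp.le, Real.sq_sqrt hq.le]
    calc P ^ a * Q ^ b = (Real.sqrt P ^ a * Real.sqrt Q ^ b) ^ 2 := h2.symm
      _ ≤ (a * Real.sqrt P + b * Real.sqrt Q) ^ 2 := by
          apply pow_le_pow_left₀ (by positivity) hgm
  linarith

/-- The function `f(x, y, z₁, …, zₙ) = log(x·y − Σₖ zₖ²)` is concave on the open subset of
`ℝ^{n+2}` where `x > 0`, `y > 0`, and `x·y − Σₖ zₖ² > 0`. -/
theorem stmt_0 (n : ℕ) (hn : 1 ≤ n) :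
    ConcaveOn ℝ
      {p : ℝ × ℝ × (Fin n → ℝ) |
        0 < p.1 ∧ 0 < p.2.1 ∧ 0 < p.1 * p.2.1 - ∑ k, (p.2.2 k) ^ 2}
      (fun p => Real.log (p.1 * p.2.1 - ∑ k, (p.2.2 k) ^ 2)) := by
  constructor
  · intro p hp q hq a b ha hb hab
    obtain ⟨hxp, hyp, hgp⟩ := hp
    obtain ⟨hxq, hyq, hgq⟩ := hq
    have key := main_ineq n p.1 p.2.1 q.1 q.2.1 p.2.2 q.2.2 hxp hyp hxq hyq hgp hgq a b ha hb hab
    have hpos : 0 < (p.1 * p.2.1 - ∑ k, (p.2.2 k) ^ 2) ^ a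
        * (q.1 * q.2.1 - ∑ k, (q.2.2 k) ^ 2) ^ b := by positivity
    refine ⟨?_, ?_, ?_⟩
    · show 0 < a * p.1 + b * q.1
      exact pos_comb ha hb hab hxp hxq
    · show 0 < a * p.2.1 + b * q.2.1
      exact pos_comb ha hb hab hyp hyq
    · show 0 < (a * p.1 + b * q.1) * (a * p.2.1 + b * q.2.1)
        - ∑ k, (a * p.2.2 k + b * q.2.2 k) ^ 2
      linarith
  · intro p hp q hq a b ha hb hab
    obtain ⟨hxp, hyp, hgp⟩ := hp
    obtain ⟨hxq, hyq, hgq⟩ := hq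
    have key := main_ineq n p.1 p.2.1 q.1 q.2.1 p.2.2 q.2.2 hxp hyp hxq hyq hgp hgq a b ha hb hab
    have hpos : 0 < (p.1 * p.2.1 - ∑ k, (p.2.2 k) ^ 2) ^ a
        * (q.1 * q.2.1 - ∑ k, (q.2.2 k) ^ 2) ^ b := by positivity
    show a • Real.log (p.1 * p.2.1 - ∑ k, (p.2.2 k) ^ 2)
        + b • Real.log (q.1 * q.2.1 - ∑ k, (q.2.2 k) ^ 2)
      ≤ Real.log ((a * p.1 + b * q.1) * (a * p.2.1 + b * q.2.1)
          - ∑ k, (a * p.2.2 k + b * q.2.2 k) ^ 2)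
    rw [smul_eq_mul, smul_eq_mul, ← Real.log_rpow hgp, ← Real.log_rpow hgq,
      ← Real.log_mul (ne_of_gt (Real.rpow_pos_of_pos hgp a))
        (ne_of_gt (Real.rpow_pos_of_pos hgq b))]
    exact Real.log_le_log hpos key
end

section
/- Let F : ℝ × ℝ × ℂⁿ → ℝ be given by F(x, y, z) = x·y − Σ_k |z_k|², let A = (x_A, y_A, z_A) and B = (x_B, y_B, z_B) both lie in the convex cone where x > 0, y > 0 and F > 0, and suppose F(B) > F(A). Then there exists ε > 0 such that DF(A)·(B − εE − A) > 0, where E is the element (1, 1, 0) (i.e., translating B by −ε in both the x and y coordinates keeps it in the superlevel set {F > F(A)}), and consequently DF(A)·(B − A) ≥ ε·(y_A + x_A), where DF(A) denotes the gradient of F at A. -/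
/-!
`F` is a Lorentzian quadratic form and `DF(A)·V = 2 F(A, V)` for its polar form `F(·, ·)`.
On the cone `{x ≥ 0, y ≥ 0, F ≥ 0}` the reverse Cauchy–Schwarz inequality
`F(A)·F(B) ≤ F(A, B)²`, `F(A, B) ≥ 0` holds: it reduces to AM-GM for `x_A y_B` and `y_A x_B`,
the ordinary Cauchy–Schwarz inequality for the `z`-parts, and the two-dimensional Aczél inequality
`(u² - p²)(v² - q²) ≤ (uv - pq)²`.
Hence `F(A)² < F(A) F(B) ≤ F(A, B)²`, so `DF(A)·(B - A) = 2 (F(A, B) - F(A)) > 0`, and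
`ε = DF(A)·(B - A) / (2 DF(A)·E)` works since `DF(A)·E = x_A + y_A > 0`.
-/

open scoped RealInnerProductSpace

theorem reverse_cauchySchwarz_of_sq_le {a b c d p q s : ℝ} (ha : 0 ≤ a) (hb : 0 ≤ b) (hc : 0 ≤ c)
    (hd : 0 ≤ d) (hq : 0 ≤ q) (hpab : p ^ 2 ≤ a * b) (hqcd : q ^ 2 ≤ c * d)
    (hs : s ≤ p * q) :
    0 ≤ (b * c + a * d) / 2 - s ∧
      (a * b - p ^ 2) * (c * d - q ^ 2) ≤ ((b * c + a * d) / 2 - s) ^ 2 := by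
  set u := √(a * b)
  set v := √(c * d)
  have hu2 : u ^ 2 = a * b := Real.sq_sqrt (by positivity)
  have hv2 : v ^ 2 = c * d := Real.sq_sqrt (by positivity)
  have hpu : p * q ≤ u * v :=
    mul_le_mul (Real.le_sqrt_of_sq_le hpab) (Real.le_sqrt_of_sq_le hqcd) hq (by positivity)
  have hamgm : u * v ≤ (b * c + a * d) / 2 := by
    refine (pow_le_pow_iff_left₀ (by positivity) (by positivity) two_ne_zero).mp ?_
    rw [mul_pow, hu2, hv2]
    nlinarith [sq_nonneg (b * c - a * d)]
  -- `(uv - pq)² - (u² - p²)(v² - q²) = (uq - pv)²`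
  have haczel : (u ^ 2 - p ^ 2) * (v ^ 2 - q ^ 2) ≤ (u * v - p * q) ^ 2 := by
    nlinarith [sq_nonneg (u * q - p * v)]
  refine ⟨by linarith, ?_⟩
  rw [← hu2, ← hv2]
  exact haczel.trans (pow_le_pow_left₀ (by linarith) (by linarith) 2)

noncomputable section Lorentz

variable {ι E : Type*} [Fintype ι] [NormedAddCommGroup E] [InnerProductSpace ℝ E]

def lorentzForm (p : ℝ × ℝ × (ι → E)) : ℝ :=
  p.1 * p.2.1 - ∑ k, ‖p.2.2 k‖ ^ 2

def lorentzPolar (p q : ℝ × ℝ × (ι → E)) : ℝ :=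
  (p.2.1 * q.1 + p.1 * q.2.1) / 2 - ∑ k, ⟪p.2.2 k, q.2.2 k⟫

theorem lorentzPolar_self (p : ℝ × ℝ × (ι → E)) : lorentzPolar p p = lorentzForm p := by
  simp only [lorentzPolar, lorentzForm, real_inner_self_eq_norm_sq]
  ring

theorem sum_inner_le_sqrt_mul_sqrt (x y : ι → E) :
    ∑ k, ⟪x k, y k⟫ ≤ √(∑ k, ‖x k‖ ^ 2) * √(∑ k, ‖y k‖ ^ 2) := by
  have := real_inner_le_norm (WithLp.toLp 2 x) (WithLp.toLp 2 y)
  simpa [PiLp.inner_apply, PiLp.norm_eq_of_L2] using this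

theorem fderiv_lorentzForm_apply (A V : ℝ × ℝ × (ι → E)) :
    fderiv ℝ lorentzForm A V = 2 * lorentzPolar A V := by
  have h : HasFDerivAt (lorentzForm (ι := ι) (E := E)) _ A :=
    (hasFDerivAt_fst.fun_mul hasFDerivAt_snd.fst).sub (HasFDerivAt.fun_sum fun k _ =>
      ((hasFDerivAt_apply k A.2.2).comp A hasFDerivAt_snd.snd).norm_sq)
  rw [h.fderiv]
  simp only [sub_apply, add_apply,
    smul_apply, ContinuousLinearMap.comp_apply, ContinuousLinearMap.coe_snd',
    ContinuousLinearMap.coe_fst', sum_apply, ContinuousLinearMap.proj_apply,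
    Function.comp_apply, coe_innerSL_apply, smul_eq_mul, nsmul_eq_mul, Nat.cast_ofNat,
    ← Finset.mul_sum, lorentzPolar]
  ring

theorem lorentzForm_lt_lorentzPolar {A B : ℝ × ℝ × (ι → E)} (hA₁ : 0 ≤ A.1) (hA₂ : 0 ≤ A.2.1)
    (hB₁ : 0 ≤ B.1) (hB₂ : 0 ≤ B.2.1) (hA : 0 < lorentzForm A)
    (hAB : lorentzForm A < lorentzForm B) : lorentzForm A < lorentzPolar A B := by
  have sq_sqrt_sum (x : ι → E) : √(∑ k, ‖x k‖ ^ 2) ^ 2 = ∑ k, ‖x k‖ ^ 2 :=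
    Real.sq_sqrt (Finset.sum_nonneg fun k _ => sq_nonneg _)
  obtain ⟨hpolar, hcs⟩ := reverse_cauchySchwarz_of_sq_le hA₁ hA₂ hB₁ hB₂ (Real.sqrt_nonneg _)
    (by rw [sq_sqrt_sum]; unfold lorentzForm at hA; linarith)
    (by rw [sq_sqrt_sum]; unfold lorentzForm at hA hAB; linarith)
    (sum_inner_le_sqrt_mul_sqrt A.2.2 B.2.2)
  simp only [sq_sqrt_sum] at hcs
  refine lt_of_pow_lt_pow_left₀ 2 hpolar ?_
  calc lorentzForm A ^ 2 < lorentzForm A * lorentzForm B := by rw [sq]; gcongr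
    _ ≤ _ := hcs

end Lorentz

theorem exists_pos_lt_apply_sub_smul {M : Type*} [AddCommGroup M] [Module ℝ M] (L : M →ₗ[ℝ] ℝ)
    {x e : M} (hx : 0 < L x) (he : 0 < L e) :
    ∃ ε : ℝ, 0 < ε ∧ 0 < L (x - ε • e) ∧ ε * L e ≤ L x := by
  refine ⟨L x / (2 * L e), by positivity, ?_⟩
  have hε : L x / (2 * L e) * L e = L x / 2 := by field_simp
  rw [map_sub, map_smul, smul_eq_mul, hε]
  constructor <;> linarith

/-- For `F(x, y, z) = x·y − Σ|zₖ|²` and `A`, `B` in the cone `{x > 0, y > 0, F > 0}` with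
`F(B) > F(A)`, there is `ε > 0` with `DF(A)·(B − εE − A) > 0` for `E = (1,1,0)`, and
consequently `DF(A)·(B − A) ≥ ε·(y_A + x_A)`. -/
theorem stmt_4 (n : ℕ) (A B : ℝ × ℝ × (Fin n → ℂ))
    (F : ℝ × ℝ × (Fin n → ℂ) → ℝ)
    (hF : F = fun p => p.1 * p.2.1 - ∑ k, Complex.normSq (p.2.2 k))
    (hA : 0 < A.1 ∧ 0 < A.2.1 ∧ 0 < F A)
    (hB : 0 < B.1 ∧ 0 < B.2.1 ∧ 0 < F B)
    (hFBA : F A < F B) :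
    ∃ ε : ℝ, 0 < ε ∧
      0 < fderiv ℝ F A (B - ε • ((1 : ℝ), (1 : ℝ), (0 : Fin n → ℂ)) - A) ∧
      ε * (A.2.1 + A.1) ≤ fderiv ℝ F A (B - A) := by
  obtain rfl : F = lorentzForm := hF.trans <| funext fun p => by
    simp only [lorentzForm, Complex.normSq_eq_norm_sq]
  obtain ⟨hA₁, hA₂, hFA⟩ := hA
  have hgrowth : 0 < fderiv ℝ lorentzForm A (B - A) := by
    rw [map_sub, fderiv_lorentzForm_apply, fderiv_lorentzForm_apply, lorentzPolar_self]
    linarith [lorentzForm_lt_lorentzPolar hA₁.le hA₂.le hB.1.le hB.2.1.le hFA hFBA]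
  have hE : fderiv ℝ lorentzForm A ((1 : ℝ), (1 : ℝ), (0 : Fin n → ℂ)) = A.2.1 + A.1 := by
    simp only [fderiv_lorentzForm_apply, lorentzPolar, Pi.zero_apply, inner_zero_right,
      Finset.sum_const_zero, sub_zero]
    ring
  obtain ⟨ε, hε, hpos, hle⟩ := exists_pos_lt_apply_sub_smul (fderiv ℝ lorentzForm A).toLinearMap
    hgrowth (by rw [ContinuousLinearMap.coe_coe, hE]; linarith)
  refine ⟨ε, hε, ?_, ?_⟩
  · rwa [sub_right_comm]
  · rwa [← hE]
end

section
/- Let φ₀, φ₁ : M → ℝ and X : M → ℝ be bounded functions on a set M with X ≤ 0, and let δ > 0 be a constant such that t·A₁(z) + (1−t)·A₀(z) ≥ δ for all z ∈ M and t ∈ [0,1], where A₀, A₁ : M → ℝ are bounded functions. Then there exist constants a ≥ 1 and b ≥ a such that for all t ∈ (0,1): (2a + c₀b²)·(δ + a·n·X(z)·t(t−1)) + n·X(z)·(2a + c₀b²)·t^b·(1−t) > K₁ + K₂·(3·a²·(2t−1)² + 3·b²·t^{2b−2}·(1−(1+ε₀)t)²)·(−n·X(z)/2) for suitable fixed constants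 c₀ ∈ (0,1], ε₀ ∈ (0,1), K₁, K₂ ≥ 0 depending only on the bounds on φ₀, φ₁, X. -/
lemma key_aux (b t : ℝ) (hb : 2 ≤ b) (ht0 : 0 < t) (ht1 : t < 1) :
    t ^ (b - 1) * (1 - t) ≤ 1 / b := by
  set s := (b - 1) * (1 - t) with hs
  have hs0 : 0 ≤ s := mul_nonneg (by linarith) (by linarith)
  have h1 : t ^ (b - 1) ≤ Real.exp (-s) := by
    rw [Real.rpow_def_of_pos ht0]
    apply Real.exp_le_exp.2
    have hl := Real.log_le_sub_one_of_pos ht0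
    nlinarith
  have h2 : s * Real.exp (-s) ≤ 1 / 2 := by
    have h3 : s ≤ Real.exp (s - 1) := by linarith [Real.add_one_le_exp (s - 1)]
    have h4 : Real.exp (s - 1) * Real.exp (-s) = Real.exp (-1) := by
      rw [← Real.exp_add]; ring_nf
    have h5 : Real.exp (-1) ≤ 1 / 2 := by
      rw [Real.exp_neg]
      have : (2:ℝ) ≤ Real.exp 1 := by
        linarith [Real.add_one_le_exp (1:ℝ)]
      rw [inv_le_comm₀ (Real.exp_pos 1) (by norm_num)]
      linarith
    calc s * Real.exp (-s) ≤ Real.exp (s - 1) * Real.exp (-s) :=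
          mul_le_mul_of_nonneg_right h3 (Real.exp_pos _).le
      _ = Real.exp (-1) := h4
      _ ≤ 1 / 2 := h5
  have hb0 : (0:ℝ) < b := by linarith
  rw [le_div_iff₀ hb0]
  have h7 : t ^ (b - 1) * (1 - t) ≤ Real.exp (-s) * (1 - t) :=
    mul_le_mul_of_nonneg_right h1 (by linarith)
  have h8 : Real.exp (-s) * (1 - t) * b ≤ Real.exp (-s) * (2 * s) := by
    have : b * (1 - t) ≤ 2 * s := by rw [hs]; nlinarith
    nlinarith [Real.exp_pos (-s)]
  nlinarith [Real.exp_pos (-s)]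

set_option maxHeartbeats 1000000 in
/-- The scalar inequality underlying the construction of the subsolution
`Φ = tφ₁ + (1−t)φ₀ + a·t(t−1) + t^b(1−t)`: the term `(2a + c₀b²)δ` dominates all error
terms when `a ≫ 1` and `b ≫ a`. -/
theorem stmt_14 (M : Type*) (φ₀ φ₁ X A₀ A₁ : M → ℝ) (n δ : ℝ)
    (hn : 0 < n) (hδ : 0 < δ)
    (hφ₀ : ∃ C, ∀ z, |φ₀ z| ≤ C) (hφ₁ : ∃ C, ∀ z, |φ₁ z| ≤ C)
    (hXbd : ∃ C, ∀ z, |X z| ≤ C) (hX : ∀ z, X z ≤ 0)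
    (hA₀ : ∃ C, ∀ z, |A₀ z| ≤ C) (hA₁ : ∃ C, ∀ z, |A₁ z| ≤ C)
    (hA : ∀ z, ∀ t ∈ Set.Icc (0 : ℝ) 1, δ ≤ t * A₁ z + (1 - t) * A₀ z) :
    ∀ K₁ K₂ : ℝ, 0 ≤ K₁ → 0 ≤ K₂ →
      ∃ c₀ ∈ Set.Ioc (0 : ℝ) 1, ∃ ε₀ ∈ Set.Ioo (0 : ℝ) 1,
        ∃ a : ℝ, 1 ≤ a ∧ ∃ b : ℝ, a ≤ b ∧
          ∀ z, ∀ t ∈ Set.Ioo (0 : ℝ) 1,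
            K₁ + K₂ * (3 * a ^ 2 * (2 * t - 1) ^ 2 +
                3 * b ^ 2 * t ^ (2 * b - 2) * (1 - (1 + ε₀) * t) ^ 2) * (-n * X z / 2) <
              (2 * a + c₀ * b ^ 2) * (δ + a * n * X z * t * (t - 1)) +
                n * X z * (2 * a + c₀ * b ^ 2) * t ^ b * (1 - t) := by
  intro K₁ K₂ hK₁ hK₂
  -- a uniform bound E on n * (-X z) * K₂ / 2
  obtain ⟨E, hE0, hEbd⟩ : ∃ E, 0 ≤ E ∧ ∀ z, n * (-X z) * K₂ / 2 ≤ E := by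
    obtain ⟨C, hC⟩ := hXbd
    refine ⟨n * (max C 0) * K₂ / 2, by positivity, fun z => ?_⟩
    have h1 : -X z ≤ max C 0 := le_trans (by linarith [abs_le.1 (hC z)]) (le_max_left _ _)
    have h2 : n * (-X z) ≤ n * (max C 0) := mul_le_mul_of_nonneg_left h1 hn.le
    nlinarith
  -- choose ε₀
  obtain ⟨ε₀, hεpos, hε1, hεE⟩ : ∃ e : ℝ, 0 < e ∧ e < 1 ∧ 6 * E * e ^ 2 ≤ δ / 2 := by
    refine ⟨min (1/2) (Real.sqrt (δ / (12 * E + 1))), lt_min (by norm_num)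
      (Real.sqrt_pos.2 (by positivity)), lt_of_le_of_lt (min_le_left _ _) (by norm_num), ?_⟩
    have hm := min_le_right (1/2 : ℝ) (Real.sqrt (δ / (12 * E + 1)))
    have hmn : 0 ≤ min (1/2 : ℝ) (Real.sqrt (δ / (12 * E + 1))) :=
      le_min (by norm_num) (Real.sqrt_nonneg _)
    have hsq : Real.sqrt (δ / (12 * E + 1)) ^ 2 = δ / (12 * E + 1) :=
      Real.sq_sqrt (by positivity)
    have h1 : (min (1/2 : ℝ) (Real.sqrt (δ / (12 * E + 1)))) ^ 2 ≤ δ / (12 * E + 1) := by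
      nlinarith
    rw [le_div_iff₀ (by positivity : (0:ℝ) < 12 * E + 1)] at h1
    nlinarith
  -- choose b
  obtain ⟨b, hb2, hbK⟩ : ∃ b : ℝ, 2 ≤ b ∧ K₁ + 9 * E < δ / 2 * b ^ 2 := by
    set r := Real.sqrt (2 * (K₁ + 9 * E) / δ) with hr
    refine ⟨max 2 (r + 1), le_max_left _ _, ?_⟩
    have hrnn : 0 ≤ r := Real.sqrt_nonneg _
    have hrr : δ * r ^ 2 = 2 * (K₁ + 9 * E) := by
      rw [hr, Real.sq_sqrt (by positivity)]; field_simp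
    have hb1 : r + 1 ≤ max 2 (r + 1) := le_max_right _ _
    have hbsq : (r + 1) ^ 2 ≤ (max 2 (r + 1)) ^ 2 := by nlinarith
    nlinarith [mul_le_mul_of_nonneg_left hbsq (le_of_lt (half_pos hδ))]
  refine ⟨1, ⟨one_pos, le_refl 1⟩, ε₀, ⟨hεpos, hε1⟩, 1, le_refl 1, b, by linarith, ?_⟩
  intro z t ht
  obtain ⟨ht0, ht1⟩ := ht
  have hXz : X z ≤ 0 := hX z
  have hEz : n * (-X z) * K₂ / 2 ≤ E := hEbd z
  have hb0 : (0:ℝ) < b := by linarith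
  -- rpow facts; then make the rpow terms opaque
  have htb : t ^ b ≤ t := by
    have := Real.rpow_le_rpow_of_exponent_ge ht0 ht1.le (show (1:ℝ) ≤ b by linarith)
    rwa [Real.rpow_one] at this
  have htb0 : 0 ≤ t ^ b := Real.rpow_nonneg ht0.le b
  have hP0 : 0 ≤ t ^ (2 * b - 2) := Real.rpow_nonneg ht0.le _
  have hP1 : t ^ (2 * b - 2) ≤ 1 := Real.rpow_le_one ht0.le ht1.le (by linarith)
  have hA1 : b ^ 2 * (t ^ (2 * b - 2) * (1 - t) ^ 2) ≤ 1 := by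
    have hsplit : t ^ (2 * b - 2) * (1 - t) ^ 2 = (t ^ (b - 1) * (1 - t)) ^ 2 := by
      have : t ^ (2 * b - 2) = t ^ (b - 1) * t ^ (b - 1) := by
        rw [← Real.rpow_add ht0]; ring_nf
      rw [this]; ring
    rw [hsplit]
    have hkey : t ^ (b - 1) * (1 - t) ≤ 1 / b := key_aux b t hb2 ht0 ht1
    have hkey0 : 0 ≤ t ^ (b - 1) * (1 - t) :=
      mul_nonneg (Real.rpow_nonneg ht0.le _) (by linarith)
    have h1 : (t ^ (b - 1) * (1 - t)) ^ 2 ≤ (1 / b) ^ 2 := by nlinarith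
    calc b ^ 2 * (t ^ (b - 1) * (1 - t)) ^ 2 ≤ b ^ 2 * (1 / b) ^ 2 := by nlinarith
      _ = 1 := by field_simp
  set u : ℝ := t ^ b with hu
  set P : ℝ := t ^ (2 * b - 2) with hP
  clear_value u P
  -- Q bound
  have hQ : 3 * (1:ℝ) ^ 2 * (2 * t - 1) ^ 2 + 3 * b ^ 2 * P * (1 - (1 + ε₀) * t) ^ 2 ≤
      9 + 6 * ε₀ ^ 2 * b ^ 2 := by
    have hc : (1 - (1 + ε₀) * t) ^ 2 ≤ 2 * (1 - t) ^ 2 + 2 * ε₀ ^ 2 * t ^ 2 := by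
      nlinarith [sq_nonneg ((1 - t) + ε₀ * t)]
    have h3bP : (0:ℝ) ≤ 3 * b ^ 2 * P := by
      have := sq_nonneg b; nlinarith
    have hA : 3 * b ^ 2 * P * (1 - (1 + ε₀) * t) ^ 2 ≤
        3 * b ^ 2 * P * (2 * (1 - t) ^ 2 + 2 * ε₀ ^ 2 * t ^ 2) :=
      mul_le_mul_of_nonneg_left hc h3bP
    have h4 : P * t ^ 2 ≤ 1 := by nlinarith
    have hCfac : (0:ℝ) ≤ 6 * ε₀ ^ 2 * b ^ 2 := by positivity
    have hCc : 6 * ε₀ ^ 2 * b ^ 2 * (P * t ^ 2) ≤ 6 * ε₀ ^ 2 * b ^ 2 * 1 :=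
      mul_le_mul_of_nonneg_left h4 hCfac
    have hD : (2 * t - 1) ^ 2 ≤ 1 := by nlinarith
    nlinarith [hA1]
  have hQ0 : 0 ≤ 3 * (1:ℝ) ^ 2 * (2 * t - 1) ^ 2 + 3 * b ^ 2 * P * (1 - (1 + ε₀) * t) ^ 2 := by
    have h3bP : (0:ℝ) ≤ 3 * b ^ 2 * P := by
      have := sq_nonneg b; nlinarith
    nlinarith [sq_nonneg (2 * t - 1), mul_nonneg h3bP (sq_nonneg (1 - (1 + ε₀) * t))]
  set Q : ℝ := 3 * (1:ℝ) ^ 2 * (2 * t - 1) ^ 2 + 3 * b ^ 2 * P * (1 - (1 + ε₀) * t) ^ 2 with hQd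
  have hY0 : 0 ≤ -X z := by linarith
  have hf : 0 ≤ -n * X z / 2 := by nlinarith
  have hLHS : K₂ * Q * (-n * X z / 2) ≤ (9 + 6 * ε₀ ^ 2 * b ^ 2) * E := by
    have h9 : (0:ℝ) ≤ 9 + 6 * ε₀ ^ 2 * b ^ 2 := by positivity
    have step1 : K₂ * Q * (-n * X z / 2) ≤ K₂ * (9 + 6 * ε₀ ^ 2 * b ^ 2) * (-n * X z / 2) := by
      nlinarith [mul_nonneg hK₂ hf]
    have step2 : K₂ * (9 + 6 * ε₀ ^ 2 * b ^ 2) * (-n * X z / 2) ≤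
        (9 + 6 * ε₀ ^ 2 * b ^ 2) * E := by
      have h10 : K₂ * (-n * X z / 2) ≤ E := by nlinarith
      nlinarith [mul_le_mul_of_nonneg_left h10 h9]
    linarith
  have hgood : 0 ≤ n * (-X z) * (2 + b ^ 2) * (1 - t) * (t - u) := by
    have h1 : 0 ≤ t - u := by linarith
    have h2 : (0:ℝ) ≤ 2 + b ^ 2 := by positivity
    have h3 : (0:ℝ) ≤ 1 - t := by linarith
    positivity
  have hεb : 6 * E * ε₀ ^ 2 * b ^ 2 ≤ δ / 2 * b ^ 2 := by nlinarith [sq_nonneg b]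
  have hrhs : (2 * 1 + 1 * b ^ 2) * (δ + 1 * n * X z * t * (t - 1)) +
      n * X z * (2 * 1 + 1 * b ^ 2) * u * (1 - t) =
      (2 + b ^ 2) * δ + n * (-X z) * (2 + b ^ 2) * (1 - t) * (t - u) := by ring
  rw [hrhs]
  have hfin : K₁ + (9 + 6 * ε₀ ^ 2 * b ^ 2) * E < (2 + b ^ 2) * δ := by nlinarith
  linarith
end

section
/- Let v : B → ℝ be a C² function on a Euclidean ball B ⊂ ℝ^{2n} ≅ ℂⁿ, and let x be a point of the upper contact set of v, i.e., D²v(x) ≥ 0 (the real Hessian is positive semidefinite). Then the complex Hessian (v_{i j̄}(x)) is positive semidefinite, and det_{ℝ}(D²v(x)) ≤ 2^{2n}·(det_{ℂ}(v_{i j̄}(x)))². -/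
/-!
In real coordinates `z = x + i y`, let `J` be multiplication by `i` and `C = (v_{j k̄})`. The real
Hessian `H` and its conjugate `Jᵀ H J` are positive semidefinite with the same determinant, and
their average is the `J`-invariant part of `H`, which is the realification of the complex matrix
`2 C`; its determinant is therefore `|det (2 C)|² = 4ⁿ (det C)²`. The inequality then follows from
the determinant inequality `det A · det B ≤ det ((A + B) / 2)²` for positive semidefinite `A`, `B`,
which after the congruence `A = R², B = R M R` is AM–GM on the eigenvalues of `M`.
-/

open Matrix Complex
open scoped ComplexOrder MatrixOrder

namespace Matrix

section DeterminantInequality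

variable {m : Type*} [Fintype m] [DecidableEq m]

theorem IsHermitian.det_cfc {𝕜 : Type*} [RCLike 𝕜] {A : Matrix m m 𝕜} (hA : A.IsHermitian)
    (f : ℝ → ℝ) : (cfc f A).det = ∏ i, (f (hA.eigenvalues i) : 𝕜) := by
  simp [hA.cfc_eq, IsHermitian.cfc, -Unitary.conjStarAlgAut_apply]

theorem PosSemidef.det_le_det_half_smul_one_add_sq {M : Matrix m m ℝ} (hM : M.PosSemidef) :
    M.det ≤ ((1 / 2 : ℝ) • (1 + M)).det ^ 2 := by
  have hM_sa : IsSelfAdjoint M := hM.isHermitian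
  have hmid : (1 / 2 : ℝ) • (1 + M) = cfc (fun t : ℝ => (1 / 2 : ℝ) • (1 + t)) M := by
    rw [cfc_smul .., cfc_const_add .., cfc_id' ℝ M, map_one]
  rw [hmid, hM.isHermitian.det_cfc, hM.isHermitian.det_eq_prod_eigenvalues, ← Finset.prod_pow]
  refine Finset.prod_le_prod (fun i _ => hM.eigenvalues_nonneg i) fun i _ => ?_
  have hμ := hM.eigenvalues_nonneg i
  simp only [RCLike.ofReal_real_eq_id, id, smul_eq_mul]
  nlinarith [sq_nonneg (1 - hM.isHermitian.eigenvalues i)]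

theorem PosSemidef.det_mul_det_le_det_half_smul_add_sq {A B : Matrix m m ℝ} (hA : A.PosSemidef)
    (hB : B.PosSemidef) : A.det * B.det ≤ ((1 / 2 : ℝ) • (A + B)).det ^ 2 := by
  rcases eq_or_ne A.det 0 with hA0 | hA0
  · rw [hA0, zero_mul]
    positivity
  set R := CFC.sqrt A
  have hRR : R * R = A := CFC.sqrt_mul_sqrt_self A hA.nonneg
  have hR : IsUnit R.det := by
    refine isUnit_iff_ne_zero.mpr fun h => hA0 ?_
    rw [← hRR, det_mul, h, zero_mul]
  have hRsymm : Rᴴ = R := (CFC.sqrt_nonneg A).posSemidef.isHermitian.eq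
  set M := R⁻¹ * B * R⁻¹
  have hM : M.PosSemidef := by
    simpa only [conjTranspose_nonsing_inv, hRsymm] using hB.conjTranspose_mul_mul_same R⁻¹
  have hB' : B = R * M * R := by
    simp only [M, ← Matrix.mul_assoc, mul_nonsing_inv _ hR, Matrix.one_mul]
    rw [Matrix.mul_assoc, nonsing_inv_mul _ hR, Matrix.mul_one]
  have hmid : (1 / 2 : ℝ) • (A + B) = R * ((1 / 2 : ℝ) • (1 + M)) * R := by
    rw [Matrix.mul_smul, Matrix.smul_mul, mul_add, mul_one, add_mul, hRR, ← hB']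
  rw [hmid, hB', ← hRR]
  simp only [det_mul]
  calc R.det * R.det * (R.det * M.det * R.det) = R.det ^ 4 * M.det := by ring
    _ ≤ R.det ^ 4 * ((1 / 2 : ℝ) • (1 + M)).det ^ 2 := by
      gcongr
      exact hM.det_le_det_half_smul_one_add_sq
    _ = _ := by ring

end DeterminantInequality

section Realification

variable {l : Type*} [Fintype l] [DecidableEq l]

theorem det_fromBlocks_neg (E F : Matrix l l ℂ) :
    (fromBlocks E F (-F) E).det = (E + I • F).det * (E - I • F).det := by
  have hconj : fromBlocks 1 0 (-I • 1) 1 * fromBlocks E F (-F) E * fromBlocks 1 0 (I • 1) 1 =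
      fromBlocks (E + I • F) F 0 (E - I • F) := by
    simp only [fromBlocks_multiply, fromBlocks_inj, Matrix.smul_mul, Matrix.mul_smul,
      Matrix.one_mul, Matrix.mul_one, Matrix.zero_mul, Matrix.mul_zero]
    refine ⟨?_, ?_, ?_, ?_⟩ <;> match_scalars <;> simp
  simpa [det_mul, det_fromBlocks_zero₂₁] using congrArg det hconj

theorem det_fromBlocks_re_im (Z : Matrix l l ℂ) :
    (fromBlocks (Z.map re) (Z.map im) (-Z.map im) (Z.map re)).det = normSq Z.det := by
  set E := (Z.map re).map ofReal
  set F := (Z.map im).map ofReal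
  have hZ : E + I • F = Z := by
    ext j k
    simp [E, F, mul_comm I, re_add_im]
  have hZbar : E - I • F = Z.map (starRingEnd ℂ) := by
    ext j k
    simp [E, F, Complex.ext_iff]
  have hcast : ((fromBlocks (Z.map re) (Z.map im) (-Z.map im) (Z.map re)).det : ℂ) =
      (fromBlocks E F (-F) E).det := by
    rw [← ofRealHom_eq_coe, RingHom.map_det, RingHom.mapMatrix_apply, fromBlocks_map,
      Matrix.map_neg _ (map_neg _)]
    rfl
  apply ofReal_injective
  rw [hcast, det_fromBlocks_neg E F, hZ, hZbar, ← RingHom.mapMatrix_apply, ← RingHom.map_det,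
    mul_conj]

end Realification

section ComplexHessian

variable {l : Type*} [Fintype l] [DecidableEq l]

theorem PosSemidef.map_ofReal {m : Type*} [Fintype m] [DecidableEq m] {A : Matrix m m ℝ}
    (hA : A.PosSemidef) : (A.map ofReal).PosSemidef := by
  obtain ⟨K, rfl⟩ := CStarAlgebra.nonneg_iff_eq_star_mul_self.mp hA.nonneg
  have hK : (star K * K).map ofReal = (K.map ofReal)ᴴ * K.map ofReal := by
    ext
    simp [mul_apply]
  rw [hK]
  exact posSemidef_conjTranspose_mul_self _

variable (l) in
/-- Its columns are `e_{x_k} + i e_{y_k}`, i.e. the Wirtinger derivatives `2 ∂/∂z̄_k`. -/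
def wirtingerMatrix : Matrix (l ⊕ l) l ℂ :=
  fromRows 1 (I • 1)

noncomputable def complexHessian (H : Matrix (l ⊕ l) (l ⊕ l) ℝ) : Matrix l l ℂ :=
  (1 / 4 : ℂ) • ((wirtingerMatrix l)ᴴ * H.map ofReal * wirtingerMatrix l)

theorem complexHessian_apply (H : Matrix (l ⊕ l) (l ⊕ l) ℝ) (j k : l) :
    complexHessian H j k = (1 / 4 : ℂ) *
      (((H (Sum.inl j) (Sum.inl k) + H (Sum.inr j) (Sum.inr k) : ℝ) : ℂ) +
        I * (((H (Sum.inl j) (Sum.inr k) : ℝ) : ℂ) - ((H (Sum.inr j) (Sum.inl k) : ℝ) : ℂ))) := by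
  simp [complexHessian, wirtingerMatrix, mul_apply, Fintype.sum_sum_type, one_apply,
    apply_ite (starRingEnd ℂ)]
  linear_combination (-(H (Sum.inr j) (Sum.inr k) : ℂ)) * I_sq

theorem posSemidef_complexHessian {H : Matrix (l ⊕ l) (l ⊕ l) ℝ} (hH : H.PosSemidef) :
    (complexHessian H).PosSemidef :=
  (hH.map_ofReal.conjTranspose_mul_mul_same _).smul (by positivity : (0 : ℂ) ≤ 1 / 4)

variable (l) in
def complexStructure : Matrix (l ⊕ l) (l ⊕ l) ℝ :=
  fromBlocks 0 (-1) 1 0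

theorem complexStructure_transpose_mul_self :
    (complexStructure l)ᵀ * complexStructure l = 1 := by
  simp [complexStructure, fromBlocks_transpose, fromBlocks_multiply, ← fromBlocks_one]

theorem half_smul_add_complexStructure_conj (H : Matrix (l ⊕ l) (l ⊕ l) ℝ) :
    (1 / 2 : ℝ) • (H + (complexStructure l)ᵀ * H * complexStructure l) =
      let Z := (2 : ℂ) • complexHessian H
      fromBlocks (Z.map re) (Z.map im) (-Z.map im) (Z.map re) := by
  have hconj : (complexStructure l)ᵀ * H * complexStructure l =
      fromBlocks H.toBlocks₂₂ (-H.toBlocks₂₁) (-H.toBlocks₁₂) H.toBlocks₁₁ := by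
    conv_lhs => rw [← fromBlocks_toBlocks H]
    simp [complexStructure, fromBlocks_transpose, fromBlocks_multiply]
  rw [hconj]
  ext (j | j) (k | k) <;>
    simp [complexHessian_apply, toBlocks₁₁, toBlocks₁₂, toBlocks₂₁, toBlocks₂₂] <;> ring

theorem PosSemidef.det_le_four_pow_mul_normSq_det_complexHessian
    {H : Matrix (l ⊕ l) (l ⊕ l) ℝ} (hH : H.PosSemidef) :
    H.det ≤ 4 ^ Fintype.card l * normSq (complexHessian H).det := by
  set J := complexStructure l
  have hJ : (Jᵀ * H * J).PosSemidef := by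
    simpa only [conjTranspose_eq_transpose_of_trivial] using hH.conjTranspose_mul_mul_same J
  have hdet : (Jᵀ * H * J).det = H.det := by
    rw [det_mul, det_mul, mul_right_comm, ← det_mul, complexStructure_transpose_mul_self,
      det_one, one_mul]
  have key := hH.det_mul_det_le_det_half_smul_add_sq hJ
  rw [hdet, ← sq, half_smul_add_complexStructure_conj, det_fromBlocks_re_im, det_smul, map_mul,
    map_pow, normSq_ofNat] at key
  norm_num at key
  exact (pow_le_pow_iff_left₀ hH.det_nonneg
    (mul_nonneg (by positivity) (normSq_nonneg _)) two_ne_zero).mp key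

end ComplexHessian

end Matrix

theorem stmt_15_general (n : ℕ)
    (H : Matrix (Fin n ⊕ Fin n) (Fin n ⊕ Fin n) ℝ)
    (C : Matrix (Fin n) (Fin n) ℂ)
    (hC : ∀ j k : Fin n, C j k = (1 / 4 : ℂ) *
      (((H (Sum.inl j) (Sum.inl k) + H (Sum.inr j) (Sum.inr k) : ℝ) : ℂ) +
        Complex.I * (((H (Sum.inl j) (Sum.inr k) : ℝ) : ℂ) -
          ((H (Sum.inr j) (Sum.inl k) : ℝ) : ℂ))))
    (hpos : H.PosSemidef) :
    C.PosSemidef ∧ H.det ≤ 2 ^ (2 * n) * (C.det.re) ^ 2 := by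
  obtain rfl : C = complexHessian H := by
    ext j k
    rw [hC, complexHessian_apply]
  have hCpos := posSemidef_complexHessian hpos
  have hdet_real : (complexHessian H).det.im = 0 :=
    (Complex.nonneg_iff.mp hCpos.det_nonneg).2.symm
  refine ⟨hCpos, ?_⟩
  calc H.det ≤ 4 ^ n * normSq (complexHessian H).det := by
        simpa using hpos.det_le_four_pow_mul_normSq_det_complexHessian
    _ = 2 ^ (2 * n) * (complexHessian H).det.re ^ 2 := by
        rw [normSq_apply, hdet_real, pow_mul]
        ring

/-- Blocki's inequality: if the real Hessian `H` of a `C²` function `v` on `ℂⁿ ≅ ℝ^{2n}`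
is positive semidefinite at `x`, then the complex Hessian `(v_{i j̄}(x))` is positive
semidefinite and `det_ℝ(D²v(x)) ≤ 2^{2n} (det_ℂ(v_{i j̄}(x)))²`. -/
theorem stmt_15 (n : ℕ) (v : (Fin n → ℂ) → ℝ) (x : Fin n → ℂ)
    (hv : ContDiff ℝ 2 v)
    (H : Matrix (Fin n ⊕ Fin n) (Fin n ⊕ Fin n) ℝ)
    (hH : ∀ a b : Fin n ⊕ Fin n, H a b =
      iteratedFDeriv ℝ 2 v x
        ![Sum.elim (fun j => Pi.single j (1 : ℂ)) (fun j => Pi.single j Complex.I) a,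
          Sum.elim (fun j => Pi.single j (1 : ℂ)) (fun j => Pi.single j Complex.I) b])
    (C : Matrix (Fin n) (Fin n) ℂ)
    (hC : ∀ j k : Fin n, C j k = (1 / 4 : ℂ) *
      (((H (Sum.inl j) (Sum.inl k) + H (Sum.inr j) (Sum.inr k) : ℝ) : ℂ) +
        Complex.I * (((H (Sum.inl j) (Sum.inr k) : ℝ) : ℂ) -
          ((H (Sum.inr j) (Sum.inl k) : ℝ) : ℂ))))
    (hpos : H.PosSemidef) :
    C.PosSemidef ∧ H.det ≤ 2 ^ (2 * n) * (C.det.re) ^ 2 :=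
  stmt_15_general n H C hC hpos
end

section
/- Let A be an (n+1)×(n+1) Hermitian matrix of the block 'arrowhead' form: A_{00} = y, A_{0k} = conj(z_k), A_{k0} = z_k, A_{kk} = x_k for 1 ≤ k ≤ n, and A_{jk} = 0 for distinct j, k ≥ 1. Then the '2-Hessian-type' quantity F(A) := y·Σ_{k=1}^n x_k − Σ_{k=1}^n |z_k|² satisfies: for fixed x_k > 0 and y > 0 with F(A) > 0, log F(A) is a concave function of (y, x_1, ..., x_n, z_1, ..., z_n) on the region {y > 0, Σ x_k > 0, F > 0}. -/
/-!
Write `F(y, x, z) = y · Σₖ xₖ − Σₖ |zₖ|²`. This quadratic form has Lorentzian signature: it is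
negative semidefinite on the hyperplane `y = 0`. Hence for `p`, `q` with `y > 0` and `F > 0` the
quadratic polynomial `t ↦ F(p − t q)`, which is positive at `t = 0` and nonpositive at
`t = y(p)/y(q) > 0`, has a nonnegative discriminant; this is the reverse Cauchy–Schwarz inequality
`√(F(p) F(q)) ≤ B(p, q)` for the polarization `B` of `F`. Expanding `F(a p + b q)` then gives
`a √F(p) + b √F(q) ≤ √F(a p + b q)`, so `√F` is concave, and `log F = 2 log √F` is concave.
-/

open Finset Complex ComplexConjugate

namespace Arrowhead

variable {ι : Type*} [Fintype ι]

def quad (p : ℝ × (ι → ℝ) × (ι → ℂ)) : ℝ :=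
  p.1 * ∑ k, p.2.1 k - ∑ k, normSq (p.2.2 k)

/-- Twice the polarization of `quad`. -/
def polar (p q : ℝ × (ι → ℝ) × (ι → ℂ)) : ℝ :=
  p.1 * ∑ k, q.2.1 k + q.1 * ∑ k, p.2.1 k - 2 * ∑ k, (p.2.2 k * conj (q.2.2 k)).re

def cone : Set (ℝ × (ι → ℝ) × (ι → ℂ)) :=
  {p | 0 < p.1 ∧ 0 < quad p}

lemma sum_pos_of_mem_cone {p : ℝ × (ι → ℝ) × (ι → ℂ)} (hp : p ∈ cone) : 0 < ∑ k, p.2.1 k := by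
  have hw : 0 ≤ ∑ k, normSq (p.2.2 k) := sum_nonneg fun k _ => normSq_nonneg _
  have hF : 0 < quad p := hp.2
  unfold quad at hF
  exact pos_of_mul_pos_right (by linarith) hp.1.le

lemma quad_smul_add_smul (a b : ℝ) (p q : ℝ × (ι → ℝ) × (ι → ℂ)) :
    quad (a • p + b • q) = a ^ 2 * quad p + a * b * polar p q + b ^ 2 * quad q := by
  have hz : ∀ k, normSq (a • p.2.2 k + b • q.2.2 k) = a ^ 2 * normSq (p.2.2 k)
      + b ^ 2 * normSq (q.2.2 k) + 2 * (a * b) * (p.2.2 k * conj (q.2.2 k)).re := by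
    intro k
    simp only [normSq_add, Complex.real_smul, normSq_ofReal, map_mul, conj_ofReal]
    simp only [mul_re, ofReal_re, ofReal_im, mul_im]
    ring
  simp only [quad, polar, Prod.fst_add, Prod.snd_add, Prod.smul_fst, Prod.smul_snd, Pi.add_apply,
    Pi.smul_apply, smul_eq_mul, hz, sum_add_distrib, ← mul_sum]
  ring

lemma quad_sub_smul_nonpos (p q : ℝ × (ι → ℝ) × (ι → ℂ)) (hq : q.1 ≠ 0) :
    quad (p - (p.1 / q.1) • q) ≤ 0 := by
  have hy : (p - (p.1 / q.1) • q).1 = 0 := by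
    simp only [Prod.fst_sub, Prod.smul_fst, smul_eq_mul, div_mul_cancel₀ _ hq, sub_self]
  simp only [quad, hy, zero_mul, zero_sub, neg_nonpos]
  exact sum_nonneg fun k _ => normSq_nonneg _

lemma two_sqrt_mul_le_polar {p q : ℝ × (ι → ℝ) × (ι → ℂ)} (hp : p ∈ cone) (hq : q ∈ cone) :
    2 * √(quad p * quad q) ≤ polar p q := by
  set t := p.1 / q.1
  have ht : 0 < t := div_pos hp.1 hq.1
  have hroot : quad p - t * polar p q + t ^ 2 * quad q ≤ 0 := by
    have h := quad_smul_add_smul 1 (-t) p q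
    rw [one_smul, neg_smul, ← sub_eq_add_neg] at h
    linarith [quad_sub_smul_nonpos p q hq.1.ne']
  have hamgm : 2 * (t * √(quad q)) * √(quad p) ≤ (t * √(quad q)) ^ 2 + √(quad p) ^ 2 :=
    two_mul_le_add_sq _ _
  rw [mul_pow, Real.sq_sqrt hq.2.le, Real.sq_sqrt hp.2.le] at hamgm
  rw [Real.sqrt_mul hp.2.le]
  nlinarith

lemma sq_add_le_quad {p q : ℝ × (ι → ℝ) × (ι → ℂ)} (hp : p ∈ cone) (hq : q ∈ cone) {a b : ℝ}
    (ha : 0 ≤ a) (hb : 0 ≤ b) :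
    (a * √(quad p) + b * √(quad q)) ^ 2 ≤ quad (a • p + b • q) := by
  have hpolar := mul_le_mul_of_nonneg_left (two_sqrt_mul_le_polar hp hq) (mul_nonneg ha hb)
  rw [quad_smul_add_smul, Real.sqrt_mul hp.2.le] at *
  nlinarith [Real.sq_sqrt hp.2.le, Real.sq_sqrt hq.2.le]

lemma concaveOn_sqrt_quad : ConcaveOn ℝ (cone (ι := ι)) (fun p => √(quad p)) := by
  have hmean : ∀ {p q : ℝ × (ι → ℝ) × (ι → ℂ)}, p ∈ cone → q ∈ cone → ∀ {a b : ℝ}, 0 ≤ a →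
      0 ≤ b → a + b = 1 → 0 < a * √(quad p) + b * √(quad q) := fun hp hq _ _ ha hb hab =>
    convex_Ioi (0 : ℝ) (Real.sqrt_pos.2 hp.2) (Real.sqrt_pos.2 hq.2) ha hb hab
  refine ⟨fun p hp q hq _ _ ha hb hab => ⟨?_, ?_⟩, fun p hp q hq a b ha hb hab => ?_⟩
  · exact convex_Ioi (0 : ℝ) hp.1 hq.1 ha hb hab
  · exact (pow_pos (hmean hp hq ha hb hab) 2).trans_le (sq_add_le_quad hp hq ha hb)
  · exact Real.le_sqrt_of_sq_le (sq_add_le_quad hp hq ha hb)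

end Arrowhead

lemma ConcaveOn.log {E : Type*} [AddCommMonoid E] [Module ℝ E] {s : Set E} {f : E → ℝ}
    (hf : ConcaveOn ℝ s f) (hpos : ∀ x ∈ s, 0 < f x) : ConcaveOn ℝ s (fun x => Real.log (f x)) :=
  ⟨hf.1, fun x hx y hy _ _ ha hb hab =>
    (strictConcaveOn_log_Ioi.concaveOn.2 (hpos x hx) (hpos y hy) ha hb hab).trans <|
      Real.log_le_log (convex_Ioi (0 : ℝ) (hpos x hx) (hpos y hy) ha hb hab)
        (hf.2 hx hy ha hb hab)⟩

/-- The complex analogue of Donaldson's concavity lemma: for the arrowhead-type quantity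
`F = y·Σₖ xₖ − Σₖ |zₖ|²`, the function `log F` is concave on the region
`{y > 0, Σ xₖ > 0, F > 0}`. -/
theorem stmt_19 (n : ℕ) :
    ConcaveOn ℝ
      {p : ℝ × (Fin n → ℝ) × (Fin n → ℂ) |
        0 < p.1 ∧ 0 < ∑ k, p.2.1 k ∧
          0 < p.1 * ∑ k, p.2.1 k - ∑ k, Complex.normSq (p.2.2 k)}
      (fun p => Real.log (p.1 * ∑ k, p.2.1 k - ∑ k, Complex.normSq (p.2.2 k))) := by
  have hset : {p : ℝ × (Fin n → ℝ) × (Fin n → ℂ) | 0 < p.1 ∧ 0 < ∑ k, p.2.1 k ∧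
      0 < p.1 * ∑ k, p.2.1 k - ∑ k, Complex.normSq (p.2.2 k)} = Arrowhead.cone := by
    ext p
    exact ⟨fun ⟨hy, _, hF⟩ => ⟨hy, hF⟩, fun hp => ⟨hp.1, Arrowhead.sum_pos_of_mem_cone hp, hp.2⟩⟩
  rw [hset]
  have hlog := (Arrowhead.concaveOn_sqrt_quad (ι := Fin n)).log fun p hp => Real.sqrt_pos.2 hp.2
  refine (hlog.smul zero_le_two).congr fun p hp => ?_
  change 2 * Real.log √(Arrowhead.quad p) = Real.log (Arrowhead.quad p)
  rw [Real.log_sqrt hp.2.le]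
  ring
end
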